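/- Let S be a semi-Markovian causal model (SMCM) over a finite vertex set V, let M be the corresponding graph of S, and let X, Y be distinct vertices of V. Then the following three statements are equivalent: (1) there is an inducing path between X and Y in S; (2) X and Y are m-connected given every subset Z of V∖{X,Y}; (3) X and Y are adjacent in M. -/

import Mathlib

/-- The kind of an edge as traversed from left to right along a path:
forward directed (`a → b`), backward directed (`a ← b`), or bidirected (`a ↔ b`). -/
inductive EKind : Type
  | fwd | bwd | bi
deriving DecidableEq, Inhabited

/-- The edge kind has an arrowhead at its left endpoint. -/
def EKind.arrowLeft : EKind → Prop
  | .fwd => False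
  | .bwd => True
  | .bi  => True

/-- The edge kind has an arrowhead at its right endpoint. -/
def EKind.arrowRight : EKind → Prop
  | .fwd => True
  | .bwd => False
  | .bi  => True

/-- A mixed graph over a vertex type `V`: a set of directed edges and a set of
bidirected edges between distinct vertices. -/
structure MGraph (V : Type) where
  dir : V → V → Prop
  bidir : V → V → Prop
  dir_irrefl : ∀ x, ¬ dir x x
  bidir_irrefl : ∀ x, ¬ bidir x x
  bidir_symm : ∀ x y, bidir x y → bidir y x

namespace MGraph

variable {V : Type}

/-- There is an edge of the given kind (read left-to-right) between `a` and `b`. -/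
def edgeKind (G : MGraph V) : EKind → V → V → Prop
  | .fwd, a, b => G.dir a b
  | .bwd, a, b => G.dir b a
  | .bi,  a, b => G.bidir a b

/-- `x` is an ancestor of `y`: `x = y` or there is a directed path from `x` to `y`. -/
def Ancestor (G : MGraph V) : V → V → Prop := Relation.ReflTransGen G.dir

/-- The graph has no directed cycle. -/
def Acyclic (G : MGraph V) : Prop := ∀ x y, G.Ancestor x y → G.Ancestor y x → x = y

/-- `x` and `y` are adjacent: some edge joins them. -/
def Adj (G : MGraph V) (x y : V) : Prop := G.dir x y ∨ G.dir y x ∨ G.bidir x y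

/-- A path between `x` and `y`: a sequence of distinct vertices starting at `x` and
ending at `y`, together with, for each consecutive pair, an edge of the graph between
them (recorded by its kind). -/
structure Path (G : MGraph V) (x y : V) : Type where
  verts : List V
  kinds : List EKind
  len_eq : verts.length = kinds.length + 1
  nodup : verts.Nodup
  head_eq : verts.head? = some x
  last_eq : verts.getLast? = some y
  valid : ∀ i, i < kinds.length →
    G.edgeKind (kinds.getD i .fwd) (verts.getD i x) (verts.getD (i + 1) x)

namespace Path

variable {G : MGraph V} {x y : V}

/-- The `i`-th vertex on the path. -/
def vert (p : G.Path x y) (i : ℕ) : V := p.verts.getD i x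

/-- The kind of the `i`-th edge on the path. -/
def kind (p : G.Path x y) (i : ℕ) : EKind := p.kinds.getD i .fwd

/-- The (non-endpoint) vertex at position `i` is a collider on the path: both incident
edges have an arrowhead at it. -/
def ColliderAt (p : G.Path x y) (i : ℕ) : Prop :=
  1 ≤ i ∧ i + 1 < p.verts.length ∧
    (p.kind (i - 1)).arrowRight ∧ (p.kind i).arrowLeft

/-- The path is m-connecting given `Z`: every non-collider on it is not in `Z` and
every collider on it has a descendant in `Z`. -/
def MConn (p : G.Path x y) (Z : Set V) : Prop :=
  ∀ i, 1 ≤ i → i + 1 < p.verts.length →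
    (p.ColliderAt i → ∃ d ∈ Z, G.Ancestor (p.vert i) d) ∧
    (¬ p.ColliderAt i → p.vert i ∉ Z)

/-- The path is an inducing path: every non-endpoint vertex is a collider on the path
and an ancestor of one of the endpoints. -/
def Inducing (p : G.Path x y) : Prop :=
  ∀ i, 1 ≤ i → i + 1 < p.verts.length →
    p.ColliderAt i ∧ (G.Ancestor (p.vert i) x ∨ G.Ancestor (p.vert i) y)

end Path

/-- Distinct vertices `x, y ∉ Z` are m-separated by `Z`: no path between them is
m-connecting given `Z`. -/
def MSep (G : MGraph V) (x y : V) (Z : Set V) : Prop :=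
  x ≠ y ∧ x ∉ Z ∧ y ∉ Z ∧
    (∀ p : G.Path x y, ¬ p.MConn Z) ∧ (∀ p : G.Path y x, ¬ p.MConn Z)

/-- Sets `A` and `B` are m-separated by `C`: every `a ∈ A` and `b ∈ B` are. -/
def MSepSets (G : MGraph V) (A B C : Set V) : Prop :=
  ∀ a ∈ A, ∀ b ∈ B, G.MSep a b C

/-- `x` and `y` are virtually adjacent: there is an inducing path between them. -/
def VAdj (G : MGraph V) (x y : V) : Prop :=
  x ≠ y ∧ ((∃ p : G.Path x y, p.Inducing) ∨ (∃ p : G.Path y x, p.Inducing))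

/-- The graph `M` corresponding to an SMCM `S`: distinct `x, y` are adjacent in `M`
iff there is an inducing path between them in `S`, with the edge oriented `x → y` if
`x` is an ancestor of `y` in `S`, `y → x` if `y` is an ancestor of `x` in `S`, and
`x ↔ y` otherwise. -/
def mag (S : MGraph V) : MGraph V where
  dir x y := S.VAdj x y ∧ S.Ancestor x y
  bidir x y := S.VAdj x y ∧ ¬ S.Ancestor x y ∧ ¬ S.Ancestor y x
  dir_irrefl := fun x h => h.1.1 rfl
  bidir_irrefl := fun x h => h.1.1 rfl
  bidir_symm := fun _ _ h => ⟨⟨h.1.1.symm, h.1.2.symm⟩, h.2.2, h.2.1⟩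

/-- An ancestral graph: at most one edge between any two vertices, and whenever `x`
is an ancestor of `y`, no edge between `x` and `y` has an arrowhead at `x`. -/
def Ancestral (G : MGraph V) : Prop :=
  (∀ x y, G.Ancestor x y → x ≠ y → ¬ G.dir y x ∧ ¬ G.bidir x y) ∧
  (∀ x y, ¬ (G.dir x y ∧ G.bidir x y))

/-- A maximal ancestral graph: an ancestral graph in which every pair of non-adjacent
vertices is m-separated by some subset of the remaining vertices. -/
def IsMAG (G : MGraph V) : Prop :=
  G.Ancestral ∧ ∀ x y : V, x ≠ y → ¬ G.Adj x y →
    ∃ Z : Set V, x ∉ Z ∧ y ∉ Z ∧ G.MSep x y Z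

/-- The number of edges of a mixed graph (directed edges plus bidirected edges, the
latter counted as unordered pairs). -/
noncomputable def numEdges (G : MGraph V) : ℕ :=
  {p : V × V | G.dir p.1 p.2}.ncard +
    {e : Sym2 V | ∃ a b, e = s(a, b) ∧ G.bidir a b}.ncard

/-- The number of virtual adjacencies (unordered pairs of virtually adjacent
vertices). -/
noncomputable def numVAdj (G : MGraph V) : ℕ :=
  {e : Sym2 V | ∃ a b, e = s(a, b) ∧ G.VAdj a b}.ncard

/-- The number of m-separation statements entailed by the graph: triples `(X, Y, Z)`
of pairwise disjoint subsets with `X, Y` nonempty such that `X` and `Y` are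
m-separated by `Z`. -/
noncomputable def numSep (G : MGraph V) : ℕ :=
  {t : Set V × Set V × Set V | t.1.Nonempty ∧ t.2.1.Nonempty ∧
    Disjoint t.1 t.2.1 ∧ Disjoint t.1 t.2.2 ∧ Disjoint t.2.1 t.2.2 ∧
    G.MSepSets t.1 t.2.1 t.2.2}.ncard

/-- An unshielded triple `⟨a, z, b⟩`: `a, z` adjacent, `z, b` adjacent, `a, b` not
adjacent. -/
def UnshieldedTriple (G : MGraph V) (a z b : V) : Prop :=
  a ≠ z ∧ z ≠ b ∧ a ≠ b ∧ G.Adj a z ∧ G.Adj z b ∧ ¬ G.Adj a b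

/-- Some edge between `a` and `z` has an arrowhead at `z`. -/
def ArrowAt (G : MGraph V) (a z : V) : Prop := G.dir a z ∨ G.bidir a z

/-- An unshielded collider: an unshielded triple whose two edges both have arrowheads
at the middle vertex. -/
def UnshieldedCollider (G : MGraph V) (a z b : V) : Prop :=
  G.UnshieldedTriple a z b ∧ G.ArrowAt a z ∧ G.ArrowAt b z

/-- A discriminating path for `⟨X, Z, Y⟩`: a path `(V₀, V₁, ..., Vₘ = X, Z, Y)` with
`m ≥ 1` such that `V₀` and `Y` are not adjacent and every `Vᵢ` with `1 ≤ i ≤ m` is a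
collider on the path and a parent of `Y`. -/
def IsDiscriminating (G : MGraph V) {v₀ w : V} (p : G.Path v₀ w) (X Z Y : V) : Prop :=
  4 ≤ p.verts.length ∧ w = Y ∧
  p.vert (p.verts.length - 3) = X ∧
  p.vert (p.verts.length - 2) = Z ∧
  v₀ ≠ Y ∧ ¬ G.Adj v₀ Y ∧
  ∀ i, 1 ≤ i → i ≤ p.verts.length - 3 → p.ColliderAt i ∧ G.dir (p.vert i) Y

end MGraph

/-- An independence model over `V`: a set of triples `(X, Y, Z)` of pairwise disjoint
subsets of `V` with `X, Y` nonempty. -/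
def IsIndepModel {V : Type} (I : Set (Set V × Set V × Set V)) : Prop :=
  ∀ t ∈ I, t.1.Nonempty ∧ t.2.1.Nonempty ∧
    Disjoint t.1 t.2.1 ∧ Disjoint t.1 t.2.2 ∧ Disjoint t.2.1 t.2.2

/-- `G` satisfies the Markov assumption with `I`: every triple `(X, Y, Z)` such that
`X` and `Y` are m-separated by `Z` in `G` belongs to `I`. -/
def Markov {V : Type} (G : MGraph V) (I : Set (Set V × Set V × Set V)) : Prop :=
  ∀ X Y Z : Set V, X.Nonempty → Y.Nonempty →
    Disjoint X Y → Disjoint X Z → Disjoint Y Z →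
    G.MSepSets X Y Z → (X, Y, Z) ∈ I

/-- `G` satisfies the Faithfulness assumption with `I`: every triple in `I` is
m-separated in `G`. -/
def Faithful {V : Type} (G : MGraph V) (I : Set (Set V × Set V × Set V)) : Prop :=
  ∀ X Y Z : Set V, (X, Y, Z) ∈ I → G.MSepSets X Y Z

/-- `G` satisfies the Adjacency-faithfulness assumption with `I`: for adjacent
distinct `x, y` and any `Z ⊆ V ∖ {x, y}`, the triple `({x}, {y}, Z)` is not in `I`. -/
def AdjFaithful {V : Type} (G : MGraph V) (I : Set (Set V × Set V × Set V)) : Prop :=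
  ∀ x y : V, x ≠ y → G.Adj x y →
    ∀ Z : Set V, x ∉ Z → y ∉ Z → ({x}, {y}, Z) ∉ I

/-- `G` satisfies the V-adjacency-faithfulness assumption with `I`: for virtually
adjacent `x, y` and any `Z ⊆ V ∖ {x, y}`, the triple `({x}, {y}, Z)` is not in `I`. -/
def VAdjFaithful {V : Type} (G : MGraph V) (I : Set (Set V × Set V × Set V)) : Prop :=
  ∀ x y : V, G.VAdj x y →
    ∀ Z : Set V, x ∉ Z → y ∉ Z → ({x}, {y}, Z) ∉ I

/-- A MAG `G` is NoE-minimal with `I`: no MAG over `V` with strictly fewer edges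
satisfies the Markov assumption with `I`. -/
def NoEMinimalMAG {V : Type} (G : MGraph V) (I : Set (Set V × Set V × Set V)) : Prop :=
  ¬ ∃ G' : MGraph V, G'.IsMAG ∧ G'.numEdges < G.numEdges ∧ Markov G' I

/-- An SMCM `G` is NoE-minimal with `I`: no SMCM over `V` with strictly fewer edges
satisfies the Markov assumption with `I`. -/
def NoEMinimalSMCM {V : Type} (G : MGraph V) (I : Set (Set V × Set V × Set V)) : Prop :=
  ¬ ∃ G' : MGraph V, G'.Acyclic ∧ G'.numEdges < G.numEdges ∧ Markov G' I

/-- An SMCM `G` is V-adjacency-minimal with `I`: no SMCM over `V` with strictly fewer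
virtual adjacencies satisfies the Markov assumption with `I`. -/
def VAdjMinimal {V : Type} (G : MGraph V) (I : Set (Set V × Set V × Set V)) : Prop :=
  ¬ ∃ G' : MGraph V, G'.Acyclic ∧ G'.numVAdj < G.numVAdj ∧ Markov G' I

/-- A MAG `G` is NoI-minimal with `I`: no MAG over `V` entailing strictly more
m-separation statements satisfies the Markov assumption with `I`. -/
def NoIMinimalMAG {V : Type} (G : MGraph V) (I : Set (Set V × Set V × Set V)) : Prop :=
  ¬ ∃ G' : MGraph V, G'.IsMAG ∧ G.numSep < G'.numSep ∧ Markov G' I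

/-- An SMCM `G` is NoI-minimal with `I`: no SMCM over `V` entailing strictly more
m-separation statements satisfies the Markov assumption with `I`. -/
def NoIMinimalSMCM {V : Type} (G : MGraph V) (I : Set (Set V × Set V × Set V)) : Prop :=
  ¬ ∃ G' : MGraph V, G'.Acyclic ∧ G.numSep < G'.numSep ∧ Markov G' I


/-! ### Auxiliary list lemmas -/

section ListHelpers

variable {α : Type*}

lemma lgetD_drop (l : List α) (d : α) (m i : ℕ) :
    (l.drop m).getD i d = l.getD (m + i) d := by
  rcases lt_or_ge (m + i) l.length with h | h
  · rw [List.getD_eq_getElem _ _ (by simp only [List.length_drop]; omega),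
      List.getD_eq_getElem _ _ h, List.getElem_drop]
  · rw [List.getD_eq_default _ _ (by simp only [List.length_drop]; omega),
      List.getD_eq_default _ _ h]

lemma lgetD_take (l : List α) (d : α) {m i : ℕ} (h : i < m) :
    (l.take m).getD i d = l.getD i d := by
  rcases lt_or_ge i l.length with h2 | h2
  · rw [List.getD_eq_getElem _ _ (by simp only [List.length_take]; omega),
      List.getD_eq_getElem _ _ h2, List.getElem_take]
  · rw [List.getD_eq_default _ _ (by simp only [List.length_take]; omega),
      List.getD_eq_default _ _ h2]

lemma lgetD_replicate (k d : α) {n i : ℕ} (h : i < n) :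
    (List.replicate n k).getD i d = k := by
  rw [List.getD_eq_getElem _ _ (by simpa using h), List.getElem_replicate]

lemma head?_eq_some_getD (l : List α) (d : α) (h : l ≠ []) :
    l.head? = some (l.getD 0 d) := by
  cases l with
  | nil => exact absurd rfl h
  | cons a t => simp

lemma getLast?_eq_some_getD (l : List α) (d : α) (h : l ≠ []) :
    l.getLast? = some (l.getD (l.length - 1) d) := by
  have hl : l.length - 1 < l.length := by
    cases l with
    | nil => exact absurd rfl h
    | cons a t => simp
  rw [List.getLast?_eq_getElem?, List.getD_eq_getElem _ _ hl, List.getElem?_eq_getElem hl]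

lemma some_or_eq (x : α) (o : Option α) : (some x).or o = some x := rfl

lemma getLast?_cons_ne (a : α) {l : List α} (h : l ≠ []) :
    (a :: l).getLast? = l.getLast? := by
  rw [show a :: l = [a] ++ l from rfl, List.getLast?_append,
    getLast?_eq_some_getD l a h, some_or_eq]

lemma chain'_getD {R : α → α → Prop} {l : List α} (h : l.Chain' R) {i : ℕ}
    (hi : i + 1 < l.length) (d : α) : R (l.getD i d) (l.getD (i + 1) d) := by
  have h2 := List.isChain_iff_getElem.mp h i (by omega)
  rw [List.getD_eq_getElem _ _ (by omega), List.getD_eq_getElem _ _ hi]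
  simpa using h2

lemma chain'_reflTransGen {R : α → α → Prop} {l : List α} (h : l.Chain' R) (d : α) :
    ∀ i, i < l.length → Relation.ReflTransGen R (l.getD 0 d) (l.getD i d) := by
  intro i
  induction i with
  | zero => intro _; exact .refl
  | succ n ih => intro hi; exact .tail (ih (by omega)) (chain'_getD h hi d)

lemma exists_nodup_chain' {R : α → α → Prop} {a b : α} (h : Relation.ReflTransGen R a b) :
    ∃ l : List α, l.Chain' R ∧ l.head? = some a ∧ l.getLast? = some b ∧ l.Nodup := by
  refine Relation.ReflTransGen.head_induction_on h ⟨[b], List.isChain_singleton b, by simp, by simp, by simp⟩ ?_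
  rintro a c h' hrt ⟨l, hc, hh, hl, hnd⟩
  have hlne : l ≠ [] := by rintro rfl; simp at hh
  by_cases hmem : a ∈ l
  · obtain ⟨s, t, rfl⟩ := List.append_of_mem hmem
    refine ⟨a :: t, List.IsChain.suffix hc ⟨s, rfl⟩, rfl, ?_, ?_⟩
    · rw [List.getLast?_append, getLast?_eq_some_getD (a :: t) a (by simp),
        some_or_eq _ _] at hl
      rw [getLast?_eq_some_getD (a :: t) a (by simp)]
      exact hl
    · exact List.Nodup.sublist (List.sublist_append_right s (a :: t)) hnd
  · refine ⟨a :: l, ?_, rfl, ?_, ?_⟩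
    · show List.IsChain _ (a :: l)
      rw [List.isChain_cons]
      refine ⟨?_, hc⟩
      intro z hz
      rw [hh] at hz
      cases hz
      exact h'
    · rw [getLast?_cons_ne a hlne]; exact hl
    · exact List.nodup_cons.mpr ⟨hmem, hnd⟩

end ListHelpers

namespace MGraph

variable {V : Type} {S : MGraph V}

lemma vadj_symm {x y : V} (h : S.VAdj x y) : S.VAdj y x := ⟨h.1.symm, h.2.symm⟩

namespace Path

variable {x y : V} (p : S.Path x y)

lemma vlen : p.verts.length = p.kinds.length + 1 := p.len_eq

lemma verts_ne_nil : p.verts ≠ [] := by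
  intro h
  have := p.len_eq
  rw [h] at this
  simp at this

lemma vert_zero : p.vert 0 = x := by
  have h := head?_eq_some_getD p.verts x p.verts_ne_nil
  rw [p.head_eq] at h
  exact (Option.some.inj h).symm

lemma vert_last : p.vert (p.verts.length - 1) = y := by
  have h := getLast?_eq_some_getD p.verts x p.verts_ne_nil
  rw [p.last_eq] at h
  exact (Option.some.inj h).symm

lemma edge (i : ℕ) (h : i < p.kinds.length) :
    S.edgeKind (p.kind i) (p.vert i) (p.vert (i + 1)) := p.valid i h

lemma vert_inj {i j : ℕ} (hi : i < p.verts.length) (hj : j < p.verts.length)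
    (h : p.vert i = p.vert j) : i = j := by
  have hi' : p.vert i = p.verts[i] := List.getD_eq_getElem _ _ hi
  have hj' : p.vert j = p.verts[j] := List.getD_eq_getElem _ _ hj
  rw [hi', hj'] at h
  exact (p.nodup.getElem_inj_iff).mp h

end Path

/-- Property Q: every collider on the path is an ancestor of `Z`, `x` or `y`, and
every interior non-collider avoids `Z`. -/
def QProp {x y : V} (p : S.Path x y) (Z : Set V) : Prop :=
  (∀ j, p.ColliderAt j →
    (∃ d ∈ Z, S.Ancestor (p.vert j) d) ∨ S.Ancestor (p.vert j) x ∨ S.Ancestor (p.vert j) y) ∧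
  (∀ j, 1 ≤ j → j + 1 < p.verts.length → ¬ p.ColliderAt j → p.vert j ∉ Z)

/-- The set of "bad" colliders: colliders with no descendant in `Z`. -/
def Bad {x y : V} (p : S.Path x y) (Z : Set V) : Set ℕ :=
  {j | p.ColliderAt j ∧ ¬ ∃ d ∈ Z, S.Ancestor (p.vert j) d}

lemma bad_finite {x y : V} (p : S.Path x y) (Z : Set V) : (Bad p Z).Finite :=
  (Set.finite_Iio p.verts.length).subset (fun j hj => by
    have := hj.1.2.1
    simp only [Set.mem_Iio]
    omega)

lemma mconn_of_bad_empty {x y : V} {p : S.Path x y} {Z : Set V}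
    (hB : Bad p Z = ∅) (hQ : QProp p Z) : p.MConn Z := by
  intro j h1 h2
  refine ⟨?_, hQ.2 j h1 h2⟩
  intro hcj
  by_contra hnd
  have : j ∈ Bad p Z := ⟨hcj, hnd⟩
  rw [hB] at this
  exact this

section Propagation

variable {a b u v : V} (p : S.Path a b)

lemma fwd_anc (H : ∀ j, p.ColliderAt j → S.Ancestor (p.vert j) u ∨ S.Ancestor (p.vert j) v) (hb : S.Ancestor b u ∨ S.Ancestor b v) :
    ∀ m j, p.kinds.length - j ≤ m → j < p.kinds.length → p.kind j = .fwd →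
      S.Ancestor (p.vert (j + 1)) u ∨ S.Ancestor (p.vert (j + 1)) v := by
  intro m
  induction m with
  | zero => intro j h1 h2 _; omega
  | succ m ih =>
    intro j hj hjlen hk
    by_cases hend : j + 1 = p.kinds.length
    · have hv : p.vert (j + 1) = b := by
        have he : p.verts.length - 1 = j + 1 := by rw [p.vlen]; omega
        rw [← he]
        exact p.vert_last
      rw [hv]; exact hb
    · have hj1 : j + 1 < p.kinds.length := by omega
      by_cases hcol : p.ColliderAt (j + 1)
      · exact H _ hcol
      · have hk1 : p.kind (j + 1) = .fwd := by
          cases hcase : p.kind (j + 1) with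
          | fwd => rfl
          | bwd =>
            exact absurd ⟨by omega, by rw [p.vlen]; omega,
              by simp only [Nat.add_sub_cancel]; rw [hk]; trivial,
              by rw [hcase]; trivial⟩ hcol
          | bi =>
            exact absurd ⟨by omega, by rw [p.vlen]; omega,
              by simp only [Nat.add_sub_cancel]; rw [hk]; trivial,
              by rw [hcase]; trivial⟩ hcol
        have hrec := ih (j + 1) (by omega) hj1 hk1
        have hd : S.dir (p.vert (j + 1)) (p.vert (j + 2)) := by
          have he := p.edge (j + 1) hj1
          rw [hk1] at he
          exact he
        rcases hrec with h | h
        · exact Or.inl (Relation.ReflTransGen.head hd h)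
        · exact Or.inr (Relation.ReflTransGen.head hd h)

lemma bwd_anc (H : ∀ j, p.ColliderAt j → S.Ancestor (p.vert j) u ∨ S.Ancestor (p.vert j) v) (ha : S.Ancestor a u ∨ S.Ancestor a v) :
    ∀ j, j < p.kinds.length → p.kind j = .bwd →
      S.Ancestor (p.vert (j + 1)) u ∨ S.Ancestor (p.vert (j + 1)) v := by
  intro j
  induction j using Nat.strong_induction_on with
  | _ j ih =>
    intro hj hk
    have hd : S.dir (p.vert (j + 1)) (p.vert j) := by
      have he := p.edge j hj
      rw [hk] at he
      exact he
    have hsuff : S.Ancestor (p.vert j) u ∨ S.Ancestor (p.vert j) v := by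
      rcases Nat.eq_zero_or_pos j with rfl | hj0
      · rw [p.vert_zero]; exact ha
      · by_cases hcol : p.ColliderAt j
        · exact H _ hcol
        · have hk1 : p.kind (j - 1) = .bwd := by
            cases hcase : p.kind (j - 1) with
            | bwd => rfl
            | fwd =>
              exact absurd ⟨hj0, by rw [p.vlen]; omega,
                by rw [hcase]; trivial, by rw [hk]; trivial⟩ hcol
            | bi =>
              exact absurd ⟨hj0, by rw [p.vlen]; omega,
                by rw [hcase]; trivial, by rw [hk]; trivial⟩ hcol
          have hrec := ih (j - 1) (by omega) (by omega) hk1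
          rwa [Nat.sub_add_cancel hj0] at hrec
    rcases hsuff with h | h
    · exact Or.inl (Relation.ReflTransGen.head hd h)
    · exact Or.inr (Relation.ReflTransGen.head hd h)

lemma anc2_all (H : ∀ j, p.ColliderAt j → S.Ancestor (p.vert j) u ∨ S.Ancestor (p.vert j) v) (ha : S.Ancestor a u ∨ S.Ancestor a v)
    (hb : S.Ancestor b u ∨ S.Ancestor b v) :
    ∀ j, j < p.verts.length → S.Ancestor (p.vert j) u ∨ S.Ancestor (p.vert j) v := by
  intro j hj
  rcases Nat.eq_zero_or_pos j with rfl | hj0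
  · rw [p.vert_zero]; exact ha
  by_cases hend : j = p.verts.length - 1
  · subst hend; rw [p.vert_last]; exact hb
  have hjint : j + 1 < p.verts.length := by omega
  by_cases hcol : p.ColliderAt j
  · exact H _ hcol
  have hjk : j < p.kinds.length := by have := p.vlen; omega
  have hjk1 : j - 1 < p.kinds.length := by omega
  by_cases hk1 : p.kind (j - 1) = .bwd
  · have := bwd_anc p H ha (j - 1) hjk1 hk1
    rwa [Nat.sub_add_cancel hj0] at this
  by_cases hk2 : p.kind j = .fwd
  · have hrec := fwd_anc p H hb (p.kinds.length - j) j le_rfl hjk hk2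
    have hd : S.dir (p.vert j) (p.vert (j + 1)) := by
      have he := p.edge j hjk
      rw [hk2] at he
      exact he
    rcases hrec with h | h
    · exact Or.inl (Relation.ReflTransGen.head hd h)
    · exact Or.inr (Relation.ReflTransGen.head hd h)
  · exfalso
    apply hcol
    refine ⟨hj0, hjint, ?_, ?_⟩
    · cases hcase : p.kind (j - 1) with
      | fwd => trivial
      | bwd => exact absurd hcase hk1
      | bi => trivial
    · cases hcase : p.kind j with
      | fwd => exact absurd hcase hk2
      | bwd => trivial
      | bi => trivial

end Propagation

/-- The canonical separating set: ancestors of `x` or `y` other than `x, y`. -/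
def AncSet (S : MGraph V) (x y : V) : Set V :=
  {w | w ≠ x ∧ w ≠ y ∧ (S.Ancestor w x ∨ S.Ancestor w y)}

lemma inducing_of_mconn {a b x y : V} (p : S.Path a b)
    (hab : (a = x ∧ b = y) ∨ (a = y ∧ b = x))
    (hm : p.MConn (S.AncSet x y)) : p.Inducing := by
  have H : ∀ j, p.ColliderAt j →
      S.Ancestor (p.vert j) x ∨ S.Ancestor (p.vert j) y := by
    intro j hcj
    obtain ⟨d, hd, hdanc⟩ := (hm j hcj.1 hcj.2.1).1 hcj
    rcases hd.2.2 with h | h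
    · exact Or.inl (hdanc.trans h)
    · exact Or.inr (hdanc.trans h)
  have ha : S.Ancestor a x ∨ S.Ancestor a y := by
    rcases hab with ⟨rfl, rfl⟩ | ⟨rfl, rfl⟩
    · exact Or.inl .refl
    · exact Or.inr .refl
  have hb : S.Ancestor b x ∨ S.Ancestor b y := by
    rcases hab with ⟨rfl, rfl⟩ | ⟨rfl, rfl⟩
    · exact Or.inr .refl
    · exact Or.inl .refl
  intro j h1 h2
  have hcol : p.ColliderAt j := by
    by_contra hcj
    have hz := (hm j h1 h2).2 hcj
    have h2' := anc2_all p H ha hb j (by omega)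
    apply hz
    have hne_a : p.vert j ≠ a := by
      intro he
      have : j = 0 := p.vert_inj (by omega) (by omega) (by rw [p.vert_zero]; exact he)
      omega
    have hne_b : p.vert j ≠ b := by
      intro he
      have : j = p.verts.length - 1 :=
        p.vert_inj (by omega) (by omega) (by rw [p.vert_last]; exact he)
      omega
    rcases hab with ⟨rfl, rfl⟩ | ⟨rfl, rfl⟩
    · exact ⟨hne_a, hne_b, h2'⟩
    · exact ⟨hne_b, hne_a, h2'⟩
  refine ⟨hcol, ?_⟩
  have h3 := H j hcol
  rcases hab with ⟨rfl, rfl⟩ | ⟨rfl, rfl⟩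
  · exact h3
  · exact h3.symm

end MGraph

namespace MGraph

variable {V : Type} [DecidableEq V] {S : MGraph V}

lemma splice_toX {x y : V} {Z : Set V} (p : S.Path x y) (hQ : QProp p Z) {i : ℕ}
    (hcol : p.ColliderAt i) (hnd : ¬ ∃ d ∈ Z, S.Ancestor (p.vert i) d)
    (hanc : S.Ancestor (p.vert i) x) :
    ∃ p' : S.Path x y, QProp p' Z ∧ (Bad p' Z).ncard < (Bad p Z).ncard := by
  obtain ⟨hi1, hi2', _, _⟩ := hcol
  set n := p.kinds.length with hn
  have hvlen : p.verts.length = n + 1 := p.vlen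
  have hi2 : i < n := by omega
  -- the directed chain from `vert i` to `x`
  obtain ⟨dl, hch, hdh, hdl, hdnd⟩ := exists_nodup_chain' hanc
  have hdne : dl ≠ [] := by rintro rfl; simp at hdh
  have hdlpos : 0 < dl.length := List.length_pos_iff.mpr hdne
  set k := dl.length - 1 with hk
  have hdlen : dl.length = k + 1 := by omega
  have hd0 : dl.getD 0 x = p.vert i := by
    have h := head?_eq_some_getD dl x hdne
    rw [hdh] at h
    exact (Option.some.inj h).symm
  have hdk : dl.getD k x = x := by
    have h := getLast?_eq_some_getD dl x hdne
    rw [hdl] at h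
    exact (Option.some.inj h).symm
  have hine0 : p.vert i ≠ x := by
    intro h
    have : i = 0 := p.vert_inj (by omega) (by omega) (by rw [p.vert_zero]; exact h)
    omega
  have hk1 : 1 ≤ k := by
    rcases Nat.eq_zero_or_pos k with h0 | h
    · exfalso
      apply hine0
      have h2 := hdk
      rw [h0] at h2
      rw [hd0] at h2
      exact h2
    · exact h
  have hanc_all : ∀ s, s < dl.length → S.Ancestor (p.vert i) (dl.getD s x) := by
    intro s hs
    have h := chain'_reflTransGen hch x s hs
    rwa [hd0] at h
  have hnZ : ∀ s, s < dl.length → dl.getD s x ∉ Z :=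
    fun s hs hmem => hnd ⟨_, hmem, hanc_all s hs⟩
  have hnD : ∀ s, s < dl.length → ¬ ∃ d ∈ Z, S.Ancestor (dl.getD s x) d := by
    rintro s hs ⟨d, hd, ha⟩
    exact hnd ⟨d, hd, (hanc_all s hs).trans ha⟩
  -- choose the last chain vertex meeting `verts.drop i`
  set P : ℕ → Prop := fun t => dl.getD t x ∈ p.verts.drop i with hPdef
  have hP0 : P 0 := by
    show dl.getD 0 x ∈ p.verts.drop i
    rw [hd0]
    rw [List.mem_iff_getElem]
    refine ⟨0, by simp [hvlen]; omega, ?_⟩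
    rw [List.getElem_drop, ← List.getD_eq_getElem p.verts x (by omega)]
    rfl
  have hPt : P (Nat.findGreatest P k) := Nat.findGreatest_spec (Nat.zero_le k) hP0
  set t := Nat.findGreatest P k with ht
  have htk : t ≤ k := Nat.findGreatest_le k
  have hxnotdrop : x ∉ p.verts.drop i := by
    have hsplit := p.nodup
    rw [← List.take_append_drop i p.verts] at hsplit
    have hdisj := (List.nodup_append'.mp hsplit).2.2
    refine fun hxmem => hdisj ?_ hxmem
    rw [List.mem_iff_getElem]
    refine ⟨0, by simp [hvlen]; omega, ?_⟩
    rw [List.getElem_take, ← List.getD_eq_getElem p.verts x (by omega)]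
    exact p.vert_zero
  have htlt : t < k := by
    rcases Nat.lt_or_ge t k with h | h
    · exact h
    · exfalso
      have : t = k := by omega
      rw [this] at hPt
      have hPk : dl.getD k x ∈ p.verts.drop i := hPt
      rw [hdk] at hPk
      exact hxnotdrop hPk
  have hmax : ∀ s, t < s → s ≤ k → dl.getD s x ∉ p.verts.drop i :=
    fun s h1 h2 => Nat.findGreatest_is_greatest h1 h2
  -- the meeting point in `p`
  obtain ⟨s₀, hs₀, hgs₀⟩ := List.mem_iff_getElem.mp hPt
  rw [List.getElem_drop] at hgs₀
  set m := i + s₀ with hm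
  have hs₀' : s₀ < n + 1 - i := by simpa [hvlen] using hs₀
  have hm2 : m < n + 1 := by omega
  have him : i ≤ m := by omega
  have hvm : p.vert m = dl.getD t x := by
    rw [show p.vert m = p.verts.getD m x from rfl, List.getD_eq_getElem _ _ (by omega)]
    exact hgs₀
  set L := k - t with hL
  have hL1 : 1 ≤ L := by omega
  set r : List V := (dl.drop t).reverse with hr
  have hrlen : r.length = L + 1 := by simp [hr, hdlen]; omega
  set vs' : List V := r ++ p.verts.drop (m + 1) with hvs'
  set ks' : List EKind := List.replicate L EKind.bwd ++ p.kinds.drop m with hks'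
  have hvs'len : vs'.length = L + 1 + (n - m) := by
    simp [hvs', hrlen, hvlen]
  have hks'len : ks'.length = L + (n - m) := by
    simp [hks', hn]
  -- getD computations
  have hvs'A : ∀ j, j ≤ L → vs'.getD j x = dl.getD (k - j) x := by
    intro j hj
    rw [hvs', List.getD_append _ _ _ _ (by rw [hrlen]; omega), hr]
    rw [List.getD_eq_getElem _ _ (by simp only [List.length_reverse, List.length_drop]; omega),
      List.getElem_reverse, List.getElem_drop, ← List.getD_eq_getElem]
    congr 1
    simp only [List.length_drop]
    omega
  have hvs'B : ∀ s, vs'.getD (L + 1 + s) x = p.verts.getD (m + 1 + s) x := by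
    intro s
    rw [hvs', List.getD_append_right _ _ _ _ (by rw [hrlen]; omega), hrlen, lgetD_drop]
    congr 1
    omega
  have hvs'C : ∀ s, vs'.getD (L + s) x = p.verts.getD (m + s) x := by
    intro s
    cases s with
    | zero =>
      rw [Nat.add_zero, Nat.add_zero, hvs'A L le_rfl, show k - L = t from by omega]
      exact hvm.symm
    | succ s =>
      rw [show L + (s + 1) = L + 1 + s from by omega, show m + (s + 1) = m + 1 + s from by omega]
      exact hvs'B s
  have hks'A : ∀ j, j < L → ks'.getD j .fwd = .bwd := by
    intro j hj
    rw [hks', List.getD_append _ _ _ _ (by simp; omega), lgetD_replicate _ _ hj]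
  have hks'B : ∀ s, ks'.getD (L + s) .fwd = p.kinds.getD (m + s) .fwd := by
    intro s
    rw [hks', List.getD_append_right _ _ _ _ (by simp), List.length_replicate, lgetD_drop]
    congr 1
    omega
  -- nodup
  have hvm_not : p.verts[m]'(by omega) ∉ p.verts.drop (m + 1) := by
    have hsplit := p.nodup
    rw [← List.take_append_drop (m + 1) p.verts] at hsplit
    have hdisj := (List.nodup_append'.mp hsplit).2.2
    refine fun hmem => hdisj ?_ hmem
    rw [List.mem_iff_getElem]
    exact ⟨m, by simp [hvlen]; omega, by rw [List.getElem_take]⟩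
  have hsub : p.verts.drop (m + 1) ⊆ p.verts.drop i := by
    intro a ha
    rw [show m + 1 = i + (m + 1 - i) from by omega, ← List.drop_drop] at ha
    exact List.drop_subset _ _ ha
  have hnd' : vs'.Nodup := by
    rw [hvs', List.nodup_append']
    refine ⟨by rw [hr, List.nodup_reverse]; exact hdnd.sublist (List.drop_sublist t dl),
      p.nodup.sublist (List.drop_sublist _ _), ?_⟩
    intro a har hadrop
    rw [hr, List.mem_reverse] at har
    obtain ⟨s', hs', hes⟩ := List.mem_iff_getElem.mp har
    have hs'2 : t + s' < dl.length := by simp only [List.length_drop] at hs'; omega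
    rw [List.getElem_drop] at hes
    rcases Nat.eq_zero_or_pos s' with rfl | hs'pos
    · apply hvm_not
      simp only [Nat.add_zero] at hes
      have ha2 : a = dl.getD t x := by
        rw [← hes, List.getD_eq_getElem _ _ (by omega)]
      have ha3 : a = p.verts[m]'(by omega) := by
        rw [ha2, ← hvm, show p.vert m = p.verts.getD m x from rfl,
          List.getD_eq_getElem _ _ (by omega)]
      rwa [← ha3]
    · apply hmax (t + s') (by omega) (by omega)
      rw [List.getD_eq_getElem _ _ (by omega), hes]
      exact hsub hadrop
  -- head and last
  have hvs'ne : vs' ≠ [] := by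
    have : 0 < vs'.length := by rw [hvs'len]; omega
    exact List.ne_nil_of_length_pos this
  have hhead : vs'.head? = some x := by
    rw [head?_eq_some_getD vs' x hvs'ne, hvs'A 0 (by omega), Nat.sub_zero, hdk]
  have hlast : vs'.getLast? = some y := by
    rw [getLast?_eq_some_getD vs' x hvs'ne, hvs'len,
      show L + 1 + (n - m) - 1 = L + (n - m) from by omega, hvs'C (n - m),
      show m + (n - m) = n from by omega]
    have : p.verts.getD n x = p.vert (p.verts.length - 1) := by
      rw [hvlen]
      rfl
    rw [this, p.vert_last]
  -- validity
  have hvalid : ∀ j, j < ks'.length →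
      S.edgeKind (ks'.getD j .fwd) (vs'.getD j x) (vs'.getD (j + 1) x) := by
    intro j hj
    rw [hks'len] at hj
    by_cases hjL : j < L
    · rw [hks'A j hjL, hvs'A j (by omega), hvs'A (j + 1) (by omega)]
      show S.dir (dl.getD (k - (j + 1)) x) (dl.getD (k - j) x)
      have hcd := chain'_getD hch (i := k - j - 1)
        (show k - j - 1 + 1 < dl.length from by omega) x
      rw [show k - j - 1 + 1 = k - j from by omega] at hcd
      rw [show k - (j + 1) = k - j - 1 from by omega]
      exact hcd
    · set s := j - L with hs
      have hjeq : j = L + s := by omega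
      have hslt : s < n - m := by omega
      rw [hjeq, hks'B s, hvs'C s, show L + s + 1 = L + (s + 1) from by omega, hvs'C (s + 1)]
      have := p.edge (m + s) (by omega)
      rw [show m + (s + 1) = m + s + 1 from by omega]
      exact this
  set p' : S.Path x y :=
    ⟨vs', ks', by rw [hvs'len, hks'len]; omega, hnd', hhead, hlast, hvalid⟩ with hp'
  have hp'verts : p'.verts = vs' := rfl
  have hp'vert : ∀ j, p'.vert j = vs'.getD j x := fun _ => rfl
  have hp'kind : ∀ j, p'.kind j = ks'.getD j .fwd := fun _ => rfl
  -- collider structure of p'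
  have hcolL : ∀ j, j ≤ L → ¬ p'.ColliderAt j := by
    rintro j hj ⟨h1, h2, h3, h4⟩
    rw [hp'kind, hks'A (j - 1) (by omega)] at h3
    exact h3
  have hcolShift : ∀ s, 1 ≤ s → (p'.ColliderAt (L + s) ↔ p.ColliderAt (m + s)) := by
    intro s hs
    have e1 : p'.kind (L + s - 1) = p.kind (m + s - 1) := by
      rw [hp'kind, show L + s - 1 = L + (s - 1) from by omega, hks'B,
        show m + (s - 1) = m + s - 1 from by omega]
      rfl
    have e2 : p'.kind (L + s) = p.kind (m + s) := hks'B s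
    constructor
    · rintro ⟨h1, h2, h3, h4⟩
      rw [e1] at h3
      rw [e2] at h4
      exact ⟨by omega, by rw [hvlen]; rw [hp'verts, hvs'len] at h2; omega, h3, h4⟩
    · rintro ⟨h1, h2, h3, h4⟩
      rw [← e1] at h3
      rw [← e2] at h4
      exact ⟨by omega, by rw [hp'verts, hvs'len]; rw [hvlen] at h2; omega, h3, h4⟩
  have hvertShift : ∀ s, p'.vert (L + s) = p.vert (m + s) := fun s => hvs'C s
  refine ⟨p', ⟨?_, ?_⟩, ?_⟩
  · -- Q.1
    intro j hcj
    have hjL : L < j := by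
      by_contra h
      exact hcolL j (by omega) hcj
    have hjeq : j = L + (j - L) := by omega
    rw [hjeq] at hcj ⊢
    rw [hvertShift (j - L)]
    exact hQ.1 (m + (j - L)) ((hcolShift (j - L) (by omega)).mp hcj)
  · -- Q.2
    intro j h1 h2 hncj
    by_cases hjL : j ≤ L
    · rw [hp'vert, hvs'A j hjL]
      exact hnZ (k - j) (by omega)
    · have hjeq : j = L + (j - L) := by omega
      rw [hjeq, hvertShift (j - L)]
      refine hQ.2 (m + (j - L)) (by omega) ?_ ?_
      · rw [hvlen]
        rw [hp'verts, hvs'len] at h2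
        omega
      · intro hc
        apply hncj
        rw [hjeq]
        exact (hcolShift (j - L) (by omega)).mpr hc
  · -- Bad decreases
    have hBadp' : ∀ j ∈ Bad p' Z, L < j ∧ (m + (j - L)) ∈ Bad p Z ∧ m + (j - L) ≠ i := by
      rintro j ⟨hcj, hndj⟩
      have hjL : L < j := by
        by_contra h
        exact hcolL j (by omega) hcj
      have hjeq : j = L + (j - L) := by omega
      rw [hjeq] at hcj hndj
      rw [hvertShift (j - L)] at hndj
      exact ⟨hjL, ⟨(hcolShift (j - L) (by omega)).mp hcj, hndj⟩, by omega⟩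
    have hiBad : i ∈ Bad p Z := ⟨⟨hi1, hi2', ‹_›, ‹_›⟩, hnd⟩
    calc (Bad p' Z).ncard
        ≤ (Bad p Z \ {i}).ncard := by
          refine Set.ncard_le_ncard_of_injOn (fun j => m + (j - L)) ?_ ?_
            ((bad_finite p Z).diff)
          · intro j hj
            exact ⟨(hBadp' j hj).2.1, by simpa using (hBadp' j hj).2.2⟩
          · intro j1 h1 j2 h2 heq
            have := (hBadp' j1 h1).1
            have := (hBadp' j2 h2).1
            simp only at heq
            omega
      _ < (Bad p Z).ncard :=
          Set.ncard_lt_ncard (Set.sdiff_singleton_ssubset.mpr hiBad) (bad_finite p Z)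

end MGraph

namespace MGraph

variable {V : Type} [DecidableEq V] {S : MGraph V}

lemma splice_toY {x y : V} {Z : Set V} (p : S.Path x y) (hQ : QProp p Z) {i : ℕ}
    (hcol : p.ColliderAt i) (hnd : ¬ ∃ d ∈ Z, S.Ancestor (p.vert i) d)
    (hanc : S.Ancestor (p.vert i) y) :
    ∃ p' : S.Path x y, QProp p' Z ∧ (Bad p' Z).ncard < (Bad p Z).ncard := by
  obtain ⟨hi1, hi2', _, _⟩ := hcol
  set n := p.kinds.length with hn
  have hvlen : p.verts.length = n + 1 := p.vlen
  have hi2 : i < n := by omega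
  obtain ⟨dl, hch, hdh, hdl, hdnd⟩ := exists_nodup_chain' hanc
  have hdne : dl ≠ [] := by rintro rfl; simp at hdh
  have hdlpos : 0 < dl.length := List.length_pos_iff.mpr hdne
  set k := dl.length - 1 with hk
  have hdlen : dl.length = k + 1 := by omega
  have hd0 : dl.getD 0 x = p.vert i := by
    have h := head?_eq_some_getD dl x hdne
    rw [hdh] at h
    exact (Option.some.inj h).symm
  have hdk : dl.getD k x = y := by
    have h := getLast?_eq_some_getD dl x hdne
    rw [hdl] at h
    exact (Option.some.inj h).symm
  have hine0 : p.vert i ≠ y := by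
    intro h
    have : i = p.verts.length - 1 :=
      p.vert_inj (by omega) (by omega) (by rw [p.vert_last]; exact h)
    omega
  have hk1 : 1 ≤ k := by
    rcases Nat.eq_zero_or_pos k with h0 | h
    · exfalso
      apply hine0
      have h2 := hdk
      rw [h0] at h2
      rw [hd0] at h2
      exact h2
    · exact h
  have hanc_all : ∀ s, s < dl.length → S.Ancestor (p.vert i) (dl.getD s x) := by
    intro s hs
    have h := chain'_reflTransGen hch x s hs
    rwa [hd0] at h
  have hnZ : ∀ s, s < dl.length → dl.getD s x ∉ Z :=
    fun s hs hmem => hnd ⟨_, hmem, hanc_all s hs⟩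
  -- choose the last chain vertex meeting `verts.take (i+1)`
  set P : ℕ → Prop := fun t => dl.getD t x ∈ p.verts.take (i + 1) with hPdef
  have hP0 : P 0 := by
    show dl.getD 0 x ∈ p.verts.take (i + 1)
    rw [hd0]
    rw [List.mem_iff_getElem]
    refine ⟨i, by simp [hvlen]; omega, ?_⟩
    rw [List.getElem_take, ← List.getD_eq_getElem p.verts x (by omega)]
    rfl
  have hPt : P (Nat.findGreatest P k) := Nat.findGreatest_spec (Nat.zero_le k) hP0
  set t := Nat.findGreatest P k with ht
  have htk : t ≤ k := Nat.findGreatest_le k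
  have hynottake : y ∉ p.verts.take (i + 1) := by
    have hsplit := p.nodup
    rw [← List.take_append_drop (i + 1) p.verts] at hsplit
    have hdisj := (List.nodup_append'.mp hsplit).2.2
    intro hytake
    refine hdisj hytake ?_
    rw [List.mem_iff_getElem]
    refine ⟨n - (i + 1), by simp [hvlen]; omega, ?_⟩
    rw [List.getElem_drop, ← List.getD_eq_getElem p.verts x (by omega),
      show i + 1 + (n - (i + 1)) = n from by omega]
    have h2 : p.verts.getD n x = p.vert (p.verts.length - 1) := by rw [hvlen]; rfl
    rw [h2, p.vert_last]
  have htlt : t < k := by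
    rcases Nat.lt_or_ge t k with h | h
    · exact h
    · exfalso
      have heq : t = k := by omega
      rw [heq] at hPt
      have hPk : dl.getD k x ∈ p.verts.take (i + 1) := hPt
      rw [hdk] at hPk
      exact hynottake hPk
  have hmax : ∀ s, t < s → s ≤ k → dl.getD s x ∉ p.verts.take (i + 1) :=
    fun s h1 h2 => Nat.findGreatest_is_greatest h1 h2
  -- the meeting point in `p`
  obtain ⟨m, hs₀, hgs₀⟩ := List.mem_iff_getElem.mp hPt
  have hmi : m ≤ i := by simp only [List.length_take] at hs₀; omega
  rw [List.getElem_take] at hgs₀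
  have hm2 : m < n + 1 := by omega
  have hvm : p.vert m = dl.getD t x := by
    rw [show p.vert m = p.verts.getD m x from rfl, List.getD_eq_getElem _ _ (by omega)]
    exact hgs₀
  set L := k - t with hL
  have hL1 : 1 ≤ L := by omega
  set vs' : List V := p.verts.take (m + 1) ++ dl.drop (t + 1) with hvs'
  set ks' : List EKind := p.kinds.take m ++ List.replicate L EKind.fwd with hks'
  have htakelen : (p.verts.take (m + 1)).length = m + 1 := by
    rw [List.length_take, hvlen]; omega
  have hktakelen : (p.kinds.take m).length = m := by
    rw [List.length_take]; omega
  have hdroplen : (dl.drop (t + 1)).length = L := by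
    rw [List.length_drop, hdlen]; omega
  have hvs'len : vs'.length = m + 1 + L := by
    rw [hvs', List.length_append, htakelen, hdroplen]
  have hks'len : ks'.length = m + L := by
    rw [hks', List.length_append, hktakelen, List.length_replicate]
  -- getD computations
  have hvs'A : ∀ j, j ≤ m → vs'.getD j x = p.verts.getD j x := by
    intro j hj
    rw [hvs', List.getD_append _ _ _ _ (by rw [htakelen]; omega), lgetD_take _ _ (by omega)]
  have hvs'B : ∀ s, 1 ≤ s → vs'.getD (m + s) x = dl.getD (t + s) x := by
    intro s hs
    rw [hvs', List.getD_append_right _ _ _ _ (by rw [htakelen]; omega), htakelen, lgetD_drop]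
    congr 1
    omega
  have hks'A : ∀ j, j < m → ks'.getD j .fwd = p.kinds.getD j .fwd := by
    intro j hj
    rw [hks', List.getD_append _ _ _ _ (by rw [hktakelen]; omega), lgetD_take _ _ hj]
  have hks'B : ∀ s, s < L → ks'.getD (m + s) .fwd = .fwd := by
    intro s hs
    rw [hks', List.getD_append_right _ _ _ _ (by rw [hktakelen]; omega), hktakelen,
      show m + s - m = s from by omega, lgetD_replicate _ _ hs]
  -- nodup
  have hsubtake : p.verts.take (m + 1) ⊆ p.verts.take (i + 1) := by
    intro a ha
    rw [show m + 1 = min (m + 1) (i + 1) from by omega, ← List.take_take] at ha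
    exact List.take_subset _ _ ha
  have hnd' : vs'.Nodup := by
    rw [hvs', List.nodup_append']
    refine ⟨p.nodup.sublist (List.take_sublist _ _),
      hdnd.sublist (List.drop_sublist _ _), ?_⟩
    intro a ha hb
    obtain ⟨s', hs', hes⟩ := List.mem_iff_getElem.mp hb
    have hs'2 : t + 1 + s' < dl.length := by simp only [List.length_drop] at hs'; omega
    rw [List.getElem_drop] at hes
    apply hmax (t + 1 + s') (by omega) (by omega)
    rw [List.getD_eq_getElem _ _ (by omega), hes]
    exact hsubtake ha
  have hvs'ne : vs' ≠ [] := by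
    have : 0 < vs'.length := by rw [hvs'len]; omega
    exact List.ne_nil_of_length_pos this
  have hhead : vs'.head? = some x := by
    rw [head?_eq_some_getD vs' x hvs'ne, hvs'A 0 (by omega),
      show p.verts.getD 0 x = x from p.vert_zero]
  have hlast : vs'.getLast? = some y := by
    rw [getLast?_eq_some_getD vs' x hvs'ne, hvs'len,
      show m + 1 + L - 1 = m + L from by omega, hvs'B L hL1,
      show t + L = k from by omega, hdk]
  -- validity
  have hvalid : ∀ j, j < ks'.length →
      S.edgeKind (ks'.getD j .fwd) (vs'.getD j x) (vs'.getD (j + 1) x) := by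
    intro j hj
    rw [hks'len] at hj
    by_cases hjm : j < m
    · rw [hks'A j hjm, hvs'A j (by omega), hvs'A (j + 1) (by omega)]
      exact p.edge j (by omega)
    · obtain ⟨s, hjeq⟩ : ∃ s, j = m + s := ⟨j - m, by omega⟩
      have hslt : s < L := by omega
      rw [hjeq, hks'B s hslt]
      show S.dir (vs'.getD (m + s) x) (vs'.getD (m + s + 1) x)
      have hnext : vs'.getD (m + s + 1) x = dl.getD (t + s + 1) x := by
        rw [show m + s + 1 = m + (s + 1) from by omega, hvs'B (s + 1) (by omega),
          show t + (s + 1) = t + s + 1 from by omega]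
      rcases Nat.eq_zero_or_pos s with rfl | hs1
      · rw [Nat.add_zero, hvs'A m le_rfl, hnext]
        have hcd := chain'_getD hch (i := t) (show t + 1 < dl.length from by omega) x
        rw [show p.verts.getD m x = dl.getD t x from hvm]
        simpa using hcd
      · rw [hvs'B s hs1, hnext]
        exact chain'_getD hch (i := t + s) (show t + s + 1 < dl.length from by omega) x
  set p' : S.Path x y :=
    ⟨vs', ks', by rw [hvs'len, hks'len]; omega, hnd', hhead, hlast, hvalid⟩ with hp'
  have hp'verts : p'.verts = vs' := rfl
  have hp'vert : ∀ j, p'.vert j = vs'.getD j x := fun _ => rfl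
  have hp'kind : ∀ j, p'.kind j = ks'.getD j .fwd := fun _ => rfl
  have hcolHigh : ∀ j, m ≤ j → ¬ p'.ColliderAt j := by
    rintro j hj ⟨h1, h2, h3, h4⟩
    rw [hp'verts, hvs'len] at h2
    have he : p'.kind j = .fwd := by
      rw [hp'kind, show j = m + (j - m) from by omega, hks'B (j - m) (by omega)]
    rw [he] at h4
    exact h4
  have hcolLow : ∀ j, 1 ≤ j → j < m → (p'.ColliderAt j ↔ p.ColliderAt j) := by
    intro j h1 hjm
    have e1 : p'.kind (j - 1) = p.kind (j - 1) := hks'A (j - 1) (by omega)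
    have e2 : p'.kind j = p.kind j := hks'A j hjm
    constructor
    · rintro ⟨a1, a2, a3, a4⟩
      rw [e1] at a3
      rw [e2] at a4
      exact ⟨a1, by rw [hvlen]; omega, a3, a4⟩
    · rintro ⟨a1, a2, a3, a4⟩
      rw [← e1] at a3
      rw [← e2] at a4
      exact ⟨a1, by rw [hp'verts, hvs'len]; omega, a3, a4⟩
  have hvertLow : ∀ j, j ≤ m → p'.vert j = p.vert j := fun j hj => hvs'A j hj
  refine ⟨p', ⟨?_, ?_⟩, ?_⟩
  · -- Q.1
    intro j hcj
    have hjm : j < m := by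
      by_contra h
      exact hcolHigh j (by omega) hcj
    rw [hvertLow j (by omega)]
    exact hQ.1 j ((hcolLow j hcj.1 hjm).mp hcj)
  · -- Q.2
    intro j h1 h2 hncj
    rw [hp'verts, hvs'len] at h2
    by_cases hjm : j < m
    · rw [hvertLow j (by omega)]
      refine hQ.2 j h1 (by rw [hvlen]; omega) ?_
      intro hc
      exact hncj ((hcolLow j h1 hjm).mpr hc)
    · rcases Nat.eq_or_lt_of_le (by omega : m ≤ j) with heq | hlt
      · rw [hp'vert, hvs'A j (by omega), ← heq]
        rw [show p.verts.getD m x = dl.getD t x from hvm]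
        exact hnZ t (by omega)
      · rw [hp'vert, show j = m + (j - m) from by omega, hvs'B (j - m) (by omega)]
        exact hnZ (t + (j - m)) (by omega)
  · -- Bad decreases
    have hsub2 : Bad p' Z ⊆ Bad p Z \ {i} := by
      rintro j ⟨hcj, hndj⟩
      have hjm : j < m := by
        by_contra h
        exact hcolHigh j (by omega) hcj
      rw [hvertLow j (by omega)] at hndj
      exact ⟨⟨(hcolLow j hcj.1 hjm).mp hcj, hndj⟩, by simp; omega⟩
    have hiBad : i ∈ Bad p Z := ⟨⟨hi1, hi2', ‹_›, ‹_›⟩, hnd⟩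
    calc (Bad p' Z).ncard
        ≤ (Bad p Z \ {i}).ncard :=
          Set.ncard_le_ncard hsub2 ((bad_finite p Z).diff)
      _ < (Bad p Z).ncard :=
          Set.ncard_lt_ncard (Set.sdiff_singleton_ssubset.mpr hiBad) (bad_finite p Z)

end MGraph

namespace MGraph

variable {V : Type} [DecidableEq V] {S : MGraph V}

lemma splice {x y : V} {Z : Set V} (p : S.Path x y) (hQ : QProp p Z) {i : ℕ}
    (hi : i ∈ Bad p Z) :
    ∃ p' : S.Path x y, QProp p' Z ∧ (Bad p' Z).ncard < (Bad p Z).ncard := by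
  obtain ⟨hcol, hnd⟩ := hi
  rcases hQ.1 i hcol with h | h | h
  · exact absurd h hnd
  · exact splice_toX p hQ hcol hnd h
  · exact splice_toY p hQ hcol hnd h

lemma exists_mconn_of_Q {x y : V} {Z : Set V} :
    ∀ (N : ℕ) (p : S.Path x y), (Bad p Z).ncard ≤ N → QProp p Z →
      ∃ p' : S.Path x y, p'.MConn Z := by
  intro N
  induction N with
  | zero =>
    intro p hN hQ
    have hB : Bad p Z = ∅ := (Set.ncard_eq_zero (bad_finite p Z)).mp (by omega)
    exact ⟨p, mconn_of_bad_empty hB hQ⟩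
  | succ N ih =>
    intro p hN hQ
    by_cases hB : Bad p Z = ∅
    · exact ⟨p, mconn_of_bad_empty hB hQ⟩
    · obtain ⟨i, hi⟩ := Set.nonempty_iff_ne_empty.mpr hB
      obtain ⟨p', hQ', hlt⟩ := splice p hQ hi
      exact ih p' (by omega) hQ'

lemma exists_mconn_of_inducing {x y : V} (p : S.Path x y) (hp : p.Inducing) (Z : Set V) :
    ∃ p' : S.Path x y, p'.MConn Z := by
  refine exists_mconn_of_Q (Bad p Z).ncard p le_rfl ⟨?_, ?_⟩
  · intro j hcj
    exact Or.inr ((hp j hcj.1 hcj.2.1).2)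
  · intro j h1 h2 hncj
    exact absurd (hp j h1 h2).1 hncj

end MGraph

/-- For an SMCM `S` over a finite vertex set and its corresponding graph
`M = S.mag`, and distinct vertices `x, y`, the following are equivalent: (1) there is
an inducing path between `x` and `y` in `S`; (2) `x` and `y` are m-connected given
every subset `Z ⊆ V ∖ {x, y}`; (3) `x` and `y` are adjacent in `M`. -/
theorem statement_0 {V : Type} [Fintype V] [DecidableEq V]
    (S : MGraph V) (hS : S.Acyclic) (x y : V) (hxy : x ≠ y) :
    (S.VAdj x y ↔ ∀ Z : Set V, x ∉ Z → y ∉ Z → ¬ S.MSep x y Z) ∧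
    (S.VAdj x y ↔ S.mag.Adj x y) := by
  constructor
  · constructor
    · rintro ⟨-, hp | hp⟩ Z hxZ hyZ hsep
      · obtain ⟨p, hpind⟩ := hp
        obtain ⟨p', hp'⟩ := MGraph.exists_mconn_of_inducing p hpind Z
        exact hsep.2.2.2.1 p' hp'
      · obtain ⟨p, hpind⟩ := hp
        obtain ⟨p', hp'⟩ := MGraph.exists_mconn_of_inducing p hpind Z
        exact hsep.2.2.2.2 p' hp'
    · intro h
      by_contra hv
      have hxZ : x ∉ S.AncSet x y := fun hx => hx.1 rfl
      have hyZ : y ∉ S.AncSet x y := fun hy => hy.2.1 rfl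
      refine h (S.AncSet x y) hxZ hyZ ⟨hxy, hxZ, hyZ, ?_, ?_⟩
      · intro p hm
        exact hv ⟨hxy, Or.inl ⟨p, MGraph.inducing_of_mconn p (Or.inl ⟨rfl, rfl⟩) hm⟩⟩
      · intro p hm
        exact hv ⟨hxy, Or.inr ⟨p, MGraph.inducing_of_mconn p (Or.inr ⟨rfl, rfl⟩) hm⟩⟩
  · constructor
    · intro hv
      by_cases h1 : S.Ancestor x y
      · exact Or.inl ⟨hv, h1⟩
      by_cases h2 : S.Ancestor y x
      · exact Or.inr (Or.inl ⟨MGraph.vadj_symm hv, h2⟩)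
      · exact Or.inr (Or.inr ⟨hv, h1, h2⟩)
    · rintro (⟨hv, -⟩ | ⟨hv, -⟩ | ⟨hv, -⟩)
      · exact hv
      · exact MGraph.vadj_symm hv
      · exact hv
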